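/- Let f∞ : ℝ/ℤ → ℝ be a smooth function with f∞(0) = 0 and f∞'(0) = 0. Then the surface S = {(x, y, f∞(y))} in the contact manifold (T² × ℝ, ker(dy − r dx)) is not convex: there is no smooth function u on T² satisfying u·f∞'(y) − ∂u/∂x − f∞(y)·∂u/∂y > 0 everywhere. Concretely: restricting the inequality to the circle {y = 0} gives ∂u/∂x(x,0) < 0 for all x ∈ ℝ/ℤ, which is impossible for a periodic function. -/

import Mathlib

/-- Non-convexity of S_{f∞}: if f∞ is a smooth 1-periodic function with
f∞(0) = 0 and f∞'(0) = 0, then there is no smooth doubly 1-periodic function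
u on ℝ² (representing a function on T²) satisfying Giroux's convexity
inequality u f∞'(y) − ∂u/∂x − f∞(y) ∂u/∂y > 0 everywhere. -/
theorem not_convex_S_f_infty (finf : ℝ → ℝ) (hfinf : ContDiff ℝ (⊤ : ℕ∞) finf)
    (hper : Function.Periodic finf 1) (h0 : finf 0 = 0) (h0' : deriv finf 0 = 0) :
    ¬ ∃ u : ℝ × ℝ → ℝ, ContDiff ℝ (⊤ : ℕ∞) u ∧
        (∀ x y : ℝ, u (x + 1, y) = u (x, y)) ∧
        (∀ x y : ℝ, u (x, y + 1) = u (x, y)) ∧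
        (∀ x y : ℝ,
          0 < u (x, y) * deriv finf y
              - fderiv ℝ u (x, y) (1, 0)
              - finf y * fderiv ℝ u (x, y) (0, 1)) := by
  rintro ⟨u, hu, hx, _, hineq⟩
  set g : ℝ → ℝ := fun x => u (x, 0) with hg
  have hgd : ∀ x : ℝ, HasDerivAt g (fderiv ℝ u (x, 0) (1, 0)) x := by
    intro x
    have h1 : HasDerivAt (fun x : ℝ => ((x, 0) : ℝ × ℝ)) (1, 0) x :=
      (hasDerivAt_id x).prodMk (hasDerivAt_const x 0)
    exact ((hu.differentiable (by simp) (x, 0)).hasFDerivAt).comp_hasDerivAt x h1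
  have hneg : ∀ x : ℝ, deriv g x < 0 := by
    intro x
    have h := hineq x 0
    rw [h0, h0'] at h
    simp only [mul_zero, zero_mul, sub_zero, zero_sub] at h
    have := (hgd x).deriv
    linarith [this]
  have hanti : StrictAntiOn g (Set.Icc (0 : ℝ) 1) := by
    apply strictAntiOn_of_deriv_neg (convex_Icc 0 1)
    · exact Continuous.continuousOn (by
        have : Continuous g := (hu.continuous).comp (by continuity)
        exact this)
    · intro x _
      exact hneg x
  have h10 : g 1 < g 0 :=
    hanti (by norm_num) (by norm_num) (by norm_num)
  have : g 1 = g 0 := by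
    have := hx 0 0
    simpa [hg] using this
  linarith
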